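/- Let M, H be d×d max-plus matrices and A, B the first components of (M,H)^m and (M,H)^n with m > n ≥ 2. Then the common key K = A ⊕ B ⊕ H^{∘n} ⊕ (A ⊗ H^{∘n}) simplifies to K = A ⊗ (I ⊕ H)^{⊗n}. -/

import Mathlib

open Finset

abbrev Rmax : Type := WithBot ℝ

/-- Tropical (max-plus) matrix product. -/
noncomputable def trMul {l m n : ℕ} (A : Matrix (Fin l) (Fin m) Rmax) (B : Matrix (Fin m) (Fin n) Rmax) :
    Matrix (Fin l) (Fin n) Rmax :=
  fun i j => univ.sup fun k => A i k + B k j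

/-- Entrywise tropical sum (max) of matrices. -/
noncomputable def trSup {m n : ℕ} (A B : Matrix (Fin m) (Fin n) Rmax) : Matrix (Fin m) (Fin n) Rmax :=
  fun i j => A i j ⊔ B i j

/-- Tropical identity matrix. -/
noncomputable def trId (d : ℕ) : Matrix (Fin d) (Fin d) Rmax := fun i j => if i = j then 0 else ⊥

/-- Tropical matrix powers, `trPow A 0 = I`. -/
noncomputable def trPow {d : ℕ} (A : Matrix (Fin d) (Fin d) Rmax) : ℕ → Matrix (Fin d) (Fin d) Rmax
  | 0 => trId d
  | n + 1 => trMul (trPow A n) A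

/-- Adjoint product `A ∘ B = A ⊕ B ⊕ (A ⊗ B)`. -/
noncomputable def adj {d : ℕ} (A B : Matrix (Fin d) (Fin d) Rmax) : Matrix (Fin d) (Fin d) Rmax :=
  trSup (trSup A B) (trMul A B)

/-- Adjoint powers: `adjPow A n = A^{∘n}` for `n ≥ 1` (value at 0 is junk `A`). -/
noncomputable def adjPow {d : ℕ} (A : Matrix (Fin d) (Fin d) Rmax) : ℕ → Matrix (Fin d) (Fin d) Rmax
  | 0 => A
  | 1 => A
  | n + 2 => adj (adjPow A (n + 1)) A

/-- Semidirect product of pairs: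
`(M,G)·(A,H) = (M ⊕ A ⊕ H ⊕ (M ⊗ H), G ∘ H)`. -/
noncomputable def sd {d : ℕ} (p q : Matrix (Fin d) (Fin d) Rmax × Matrix (Fin d) (Fin d) Rmax) :
    Matrix (Fin d) (Fin d) Rmax × Matrix (Fin d) (Fin d) Rmax :=
  (trSup (trSup (trSup p.1 q.1) q.2) (trMul p.1 q.2), adj p.2 q.2)

/-- Semidirect powers: `sdPow p n = p^n` for `n ≥ 1` (value at 0 is junk `p`). -/
noncomputable def sdPow {d : ℕ} (p : Matrix (Fin d) (Fin d) Rmax × Matrix (Fin d) (Fin d) Rmax) :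
    ℕ → Matrix (Fin d) (Fin d) Rmax × Matrix (Fin d) (Fin d) Rmax
  | 0 => p
  | 1 => p
  | n + 2 => sd (sdPow p (n + 1)) p

/-- Maximum cycle mean `λ(F)`: maximum over cycles `(c 0, c 1, …, c k, c 0)` of
the average arc weight. -/
noncomputable def mcm {d : ℕ} (F : Matrix (Fin d) (Fin d) Rmax) : Rmax :=
  univ.sup fun kc : Σ k : Fin d, Fin (k.1 + 1) → Fin d =>
    (∑ i, F (kc.2 i) (kc.2 (i + 1))).map fun w => w / ((kc.1 : ℕ) + 1)

/-- Metric matrix `A⁺ = A ⊕ A^{⊗2} ⊕ ⋯ ⊕ A^{⊗d}`. -/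
noncomputable def metric {d : ℕ} (A : Matrix (Fin d) (Fin d) Rmax) : Matrix (Fin d) (Fin d) Rmax :=
  fun i j => (Finset.Icc 1 d).sup fun k => trPow A k i j

/-- Kleene star `A* = I ⊕ A ⊕ ⋯ ⊕ A^{⊗(d-1)}`. -/
noncomputable def kstar {d : ℕ} (A : Matrix (Fin d) (Fin d) Rmax) : Matrix (Fin d) (Fin d) Rmax :=
  fun i j => (Finset.range d).sup fun k => trPow A k i j

/-- `F` is irreducible: its weighted digraph is strongly connected. -/
def TrIrreducible {d : ℕ} (F : Matrix (Fin d) (Fin d) Rmax) : Prop :=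
  ∀ i j : Fin d, Relation.ReflTransGen (fun a b => F a b ≠ ⊥) i j

/-!
Because `I ⊕ H^{∘k}` absorbs one more factor `I ⊕ H` into `I ⊕ H^{∘(k+1)}`, one has
`(I ⊕ H)^{⊗n} = I ⊕ H^{∘n}`, so the right-hand side is `A ⊕ A ⊗ H^{∘n}`. The remaining terms
`B` and `H^{∘n}` of the key are absorbed by `A`: the first components of the semidirect powers
of `(M, H)` increase with the exponent, and that of `(M, H)^{k+1}` contains `H^{∘k}` as a term.
-/

section TropicalMatrix

variable {l m n d : ℕ}

lemma trMul_trSup_right (A : Matrix (Fin l) (Fin m) Rmax) (B C : Matrix (Fin m) (Fin n) Rmax) :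
    trMul A (trSup B C) = trSup (trMul A B) (trMul A C) := by
  funext i j
  simp only [trMul, trSup, add_max]
  exact Finset.sup_sup

lemma trMul_trSup_left (A B : Matrix (Fin l) (Fin m) Rmax) (C : Matrix (Fin m) (Fin n) Rmax) :
    trMul (trSup A B) C = trSup (trMul A C) (trMul B C) := by
  funext i j
  simp only [trMul, trSup, max_add]
  exact Finset.sup_sup

lemma trMul_trId (A : Matrix (Fin l) (Fin d) Rmax) : trMul A (trId d) = A := by
  funext i j
  refine le_antisymm (Finset.sup_le fun k _ => ?_) ?_
  · by_cases h : k = j <;> simp [trId, h]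
  · simpa [trId, trMul] using le_sup (f := fun k => A i k + trId d k j) (mem_univ j)

lemma trId_trMul (A : Matrix (Fin d) (Fin n) Rmax) : trMul (trId d) A = A := by
  funext i j
  refine le_antisymm (Finset.sup_le fun k _ => ?_) ?_
  · by_cases h : i = k <;> simp [trId, h]
  · simpa [trId, trMul] using le_sup (f := fun k => trId d i k + A k j) (mem_univ i)

lemma trMul_trSup_trId (A : Matrix (Fin l) (Fin d) Rmax) (X : Matrix (Fin d) (Fin d) Rmax) :
    trMul A (trSup (trId d) X) = trSup A (trMul A X) := by
  rw [trMul_trSup_right, trMul_trId]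

def TrLE (A B : Matrix (Fin m) (Fin n) Rmax) : Prop := ∀ i j, A i j ≤ B i j

lemma TrLE.refl (A : Matrix (Fin m) (Fin n) Rmax) : TrLE A A := fun _ _ => le_rfl

lemma TrLE.trans {A B C : Matrix (Fin m) (Fin n) Rmax} (hAB : TrLE A B) (hBC : TrLE B C) :
    TrLE A C := fun i j => (hAB i j).trans (hBC i j)

lemma trSup_eq_left_of_trLE {A B : Matrix (Fin m) (Fin n) Rmax} (h : TrLE B A) :
    trSup A B = A := by
  funext i j
  exact sup_eq_left.2 (h i j)

lemma trMul_mono_left {X Y : Matrix (Fin l) (Fin m) Rmax} (h : TrLE X Y)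
    (Z : Matrix (Fin m) (Fin n) Rmax) : TrLE (trMul X Z) (trMul Y Z) :=
  fun i _ => sup_mono_fun fun k _ => add_le_add_left (h i k) _

lemma trPow_trSup_trId (H : Matrix (Fin d) (Fin d) Rmax) (hn : 1 ≤ n) :
    trPow (trSup (trId d) H) n = trSup (trId d) (adjPow H n) := by
  induction n, hn using Nat.le_induction with
  | base => exact trId_trMul _
  | succ n hn ih =>
    obtain ⟨k, rfl⟩ := Nat.exists_eq_add_of_le' hn
    change trMul (trPow (trSup (trId d) H) (k + 1)) (trSup (trId d) H) = _
    rw [ih, trMul_trSup_trId, trMul_trSup_left, trId_trMul]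
    funext i j
    simp only [trSup, adjPow, adj]
    ac_rfl

end TropicalMatrix

section SemidirectPower

variable {d : ℕ}

lemma sdPow_succ_fst_trLE (p : Matrix (Fin d) (Fin d) Rmax × Matrix (Fin d) (Fin d) Rmax)
    {k : ℕ} (hk : 1 ≤ k) : TrLE (sdPow p k).1 (sdPow p (k + 1)).1 := by
  obtain ⟨k, rfl⟩ := Nat.exists_eq_add_of_le' hk
  exact fun i j => le_sup_of_le_left (le_sup_of_le_left le_sup_left)

lemma sdPow_fst_mono (p : Matrix (Fin d) (Fin d) Rmax × Matrix (Fin d) (Fin d) Rmax)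
    {a b : ℕ} (ha : 1 ≤ a) (hab : a ≤ b) : TrLE (sdPow p a).1 (sdPow p b).1 := by
  induction b, hab using Nat.le_induction with
  | base => exact TrLE.refl _
  | succ b hb ih => exact ih.trans (sdPow_succ_fst_trLE p (ha.trans hb))

lemma adjPow_trLE_sdPow_succ_fst (M H : Matrix (Fin d) (Fin d) Rmax) {k : ℕ} (hk : 1 ≤ k) :
    TrLE (adjPow H k) (sdPow (M, H) (k + 1)).1 := by
  induction k, hk using Nat.le_induction with
  | base => exact fun i j => le_sup_of_le_left le_sup_right
  | succ k hk ih =>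
    obtain ⟨k, rfl⟩ := Nat.exists_eq_add_of_le' hk
    intro i j
    simp only [adjPow, adj, sdPow, sd, trSup]
    refine sup_le (sup_le ?_ ?_) ?_
    · exact le_sup_of_le_left (le_sup_of_le_left (le_sup_of_le_left (ih i j)))
    · exact le_sup_of_le_left le_sup_right
    · exact le_sup_of_le_right (trMul_mono_left ih H i j)

end SemidirectPower

theorem key_simplification {d : ℕ} (M H : Matrix (Fin d) (Fin d) Rmax) (m n : ℕ)
    (hn : 2 ≤ n) (hmn : m > n) (A B : Matrix (Fin d) (Fin d) Rmax)
    (hA : A = (sdPow (M, H) m).1) (hB : B = (sdPow (M, H) n).1) :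
    trSup (trSup (trSup A B) (adjPow H n)) (trMul A (adjPow H n)) =
      trMul A (trPow (trSup (trId d) H) n) := by
  have hBA : TrLE B A := hA ▸ hB ▸ sdPow_fst_mono _ (by omega) hmn.le
  have hHA : TrLE (adjPow H n) A := hA ▸
    (adjPow_trLE_sdPow_succ_fst M H (by omega)).trans (sdPow_fst_mono _ (by omega) hmn)
  rw [trPow_trSup_trId H (by omega), trMul_trSup_trId, trSup_eq_left_of_trLE hBA,
    trSup_eq_left_of_trLE hHA]
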